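/- Let $X_1, \ldots, X_n$ be i.i.d. real random variables with common distribution $m$ having CDF $F$. Then $\mathbb{E}\left[W_1\left(m, \frac{1}{n}\sum_{k=1}^n \delta_{X_k}\right)\right] \leq \frac{1}{\sqrt{n}}\int_{\mathbb{R}} \sqrt{F(x)(1-F(x))}\,dx$. -/

import Mathlib

open MeasureTheory Set
open scoped ENNReal

/-- The cumulative distribution function of a measure on `ℝ`. -/
noncomputable def cdfOf (m : Measure ℝ) (x : ℝ) : ℝ := (m (Iic x)).toReal

/-- Wasserstein-1 distance as the `L¹` distance between the CDFs
(here expressed in `ℝ≥0∞` so that it may be infinite). -/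
noncomputable def W1e (m m' : Measure ℝ) : ℝ≥0∞ :=
  ∫⁻ x, ENNReal.ofReal |cdfOf m x - cdfOf m' x|

/-- Empirical measure of a sample `X₁(ω), …, Xₙ(ω)`. -/
noncomputable def empMeasure (n : ℕ) (X : Fin n → ℝ) : Measure ℝ :=
  ((n : ℝ≥0∞)⁻¹) • ∑ k : Fin n, Measure.dirac (X k)

/-!
Exchanging the expectation with the `dx`-integral (Tonelli), the left side becomes
`∫ E|F(x) - Fₙ(x)| dx`. For fixed `x`, `n Fₙ(x)` is a sum of `n` independent Bernoulli
indicators with parameter `F(x)`, so `Fₙ(x)` has mean `F(x)` and variance `F(x)(1 - F(x))/n`;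
and on a probability space `E|Y - EY| ≤ √(Var Y)`, since the `L¹` norm is dominated by the `L²`
norm.
-/

open ProbabilityTheory

noncomputable def empiricalFreq {Ω α ι : Type*} [Fintype ι] (X : ι → Ω → α) (s : Set α)
    (ω : Ω) : ℝ :=
  (Fintype.card ι : ℝ)⁻¹ * ∑ i, s.indicator 1 (X i ω)

lemma cdfOf_empMeasure {Ω : Type*} (n : ℕ) (X : Fin n → Ω → ℝ) (ω : Ω) (x : ℝ) :
    cdfOf (empMeasure n fun k => X k ω) x = empiricalFreq X (Iic x) ω := by
  rw [cdfOf, empMeasure, Measure.smul_apply, Measure.finsetSum_apply, smul_eq_mul,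
    ENNReal.toReal_mul, ENNReal.toReal_inv, ENNReal.toReal_natCast,
    ENNReal.toReal_sum fun k _ => measure_ne_top _ _, empiricalFreq, Fintype.card_fin]
  congr 1
  refine Finset.sum_congr rfl fun k _ => ?_
  rw [Measure.dirac_apply' _ measurableSet_Iic]
  by_cases h : X k ω ≤ x <;> simp [h]

lemma measurable_empiricalFreq_Iic {Ω ι : Type*} [MeasurableSpace Ω] [Fintype ι]
    {X : ι → Ω → ℝ} (hX : ∀ i, Measurable (X i)) :
    Measurable fun q : Ω × ℝ => empiricalFreq X (Iic q.2) q.1 := by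
  refine (Finset.measurable_sum _ fun i _ => ?_).const_mul _
  exact measurable_one.indicator (measurableSet_le ((hX i).comp measurable_fst) measurable_snd)

lemma cdfOf_eq_cdf (m : Measure ℝ) [IsProbabilityMeasure m] : cdfOf m = cdf m :=
  funext fun x => (cdf_eq_real m x).symm

lemma lintegral_enorm_sub_integral_le_sqrt_variance {Ω : Type*} [MeasurableSpace Ω]
    {P : Measure Ω} [IsProbabilityMeasure P] {Y : Ω → ℝ} (hY : MemLp Y 2 P) :
    ∫⁻ ω, ‖Y ω - P[Y]‖ₑ ∂P ≤ ENNReal.ofReal (Real.sqrt Var[Y; P]) := by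
  calc ∫⁻ ω, ‖Y ω - P[Y]‖ₑ ∂P = eLpNorm (fun ω => Y ω - P[Y]) 1 P :=
        eLpNorm_one_eq_lintegral_enorm.symm
    _ ≤ eLpNorm (fun ω => Y ω - P[Y]) 2 P :=
        eLpNorm_le_eLpNorm_of_exponent_le one_le_two (hY.1.sub aestronglyMeasurable_const)
    _ = evariance Y P ^ (1 / 2 : ℝ) := by
        rw [eLpNorm_eq_lintegral_rpow_enorm_toReal two_ne_zero ENNReal.ofNat_ne_top, evariance]
        simp
    _ = ENNReal.ofReal (Real.sqrt Var[Y; P]) := by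
        rw [← hY.ofReal_variance_eq, ENNReal.ofReal_rpow_of_nonneg (variance_nonneg _ _)
          one_half_pos.le, Real.sqrt_eq_rpow]

lemma variance_indicator_one {α : Type*} [MeasurableSpace α] (μ : Measure α)
    [IsProbabilityMeasure μ] {s : Set α} (hs : MeasurableSet s) :
    Var[s.indicator 1; μ] = μ.real s * (1 - μ.real s) := by
  have hsq : s.indicator (1 : α → ℝ) ^ 2 = s.indicator 1 := by
    ext a; by_cases h : a ∈ s <;> simp [h]
  rw [variance_eq_sub (X := s.indicator 1) ((memLp_const 1).indicator hs), hsq,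
    integral_indicator_one hs]
  ring

section IndicatorComp

variable {Ω α : Type*} [MeasurableSpace Ω] [MeasurableSpace α] {P : Measure Ω}
  {μ : Measure α} {s : Set α} {Y : Ω → α}

lemma memLp_indicator_comp [IsFiniteMeasure P] (hY : Measurable Y) (hs : MeasurableSet s)
    (p : ℝ≥0∞) : MemLp (fun ω => s.indicator (1 : α → ℝ) (Y ω)) p P :=
  show MemLp ((Y ⁻¹' s).indicator fun _ => (1 : ℝ)) p P from (memLp_const 1).indicator (hY hs)

lemma integral_indicator_comp (hY : Measurable Y) (hmap : P.map Y = μ) (hs : MeasurableSet s) :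
    ∫ ω, s.indicator 1 (Y ω) ∂P = μ.real s := by
  subst hmap
  rw [← integral_indicator_one hs,
    integral_map hY.aemeasurable (stronglyMeasurable_one.indicator hs).aestronglyMeasurable]

lemma variance_indicator_comp [IsProbabilityMeasure μ] (hY : Measurable Y) (hmap : P.map Y = μ)
    (hs : MeasurableSet s) :
    Var[fun ω => s.indicator 1 (Y ω); P] = μ.real s * (1 - μ.real s) := by
  subst hmap
  rw [← variance_indicator_one _ hs,
    variance_map (measurable_one.indicator hs).aemeasurable hY.aemeasurable]
  rfl

end IndicatorComp

section EmpiricalFreq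

variable {Ω α ι : Type*} [MeasurableSpace Ω] [MeasurableSpace α] [Fintype ι]
  {P : Measure Ω} {μ : Measure α} {X : ι → Ω → α} {s : Set α}

lemma memLp_empiricalFreq [IsFiniteMeasure P] (hX : ∀ i, Measurable (X i))
    (hs : MeasurableSet s) : MemLp (empiricalFreq X s) 2 P :=
  (memLp_finsetSum _ fun i _ => memLp_indicator_comp (hX i) hs 2).const_mul _

lemma integral_empiricalFreq [IsFiniteMeasure P] [Nonempty ι] (hX : ∀ i, Measurable (X i))
    (hmap : ∀ i, P.map (X i) = μ) (hs : MeasurableSet s) :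
    P[empiricalFreq X s] = μ.real s := by
  simp only [empiricalFreq]
  rw [integral_const_mul, integral_finsetSum _ fun i _ =>
      (memLp_indicator_comp (hX i) hs 1).integrable le_rfl]
  simp only [integral_indicator_comp (hX _) (hmap _) hs, Finset.sum_const, Finset.card_univ,
    nsmul_eq_mul]
  field_simp

lemma variance_empiricalFreq [IsFiniteMeasure P] [IsProbabilityMeasure μ]
    (hX : ∀ i, Measurable (X i)) (hmap : ∀ i, P.map (X i) = μ)
    (hindep : Pairwise fun i j => IndepFun (X i) (X j) P) (hs : MeasurableSet s) :
    Var[empiricalFreq X s; P] = μ.real s * (1 - μ.real s) / Fintype.card ι := by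
  have hsum : empiricalFreq X s =
      (Fintype.card ι : ℝ)⁻¹ • ∑ i, fun ω => s.indicator 1 (X i ω) := by
    ext ω; simp [empiricalFreq]
  have hmeas_ind : Measurable (s.indicator (1 : α → ℝ)) := measurable_one.indicator hs
  rw [hsum, variance_smul, IndepFun.variance_sum (fun i _ => memLp_indicator_comp (hX i) hs 2)
    fun i _ j _ hij => (hindep hij).comp hmeas_ind hmeas_ind]
  simp only [variance_indicator_comp (hX _) (hmap _) hs, Finset.sum_const, Finset.card_univ,
    nsmul_eq_mul]
  rcases eq_or_ne (Fintype.card ι : ℝ) 0 with h | h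
  · simp [h]
  · field_simp

lemma lintegral_abs_sub_empiricalFreq_le [IsProbabilityMeasure P] [IsProbabilityMeasure μ]
    [Nonempty ι] (hX : ∀ i, Measurable (X i)) (hmap : ∀ i, P.map (X i) = μ)
    (hindep : Pairwise fun i j => IndepFun (X i) (X j) P) (hs : MeasurableSet s) :
    ∫⁻ ω, ENNReal.ofReal |μ.real s - empiricalFreq X s ω| ∂P ≤
      ENNReal.ofReal (Real.sqrt (μ.real s * (1 - μ.real s) / Fintype.card ι)) := by
  have h := lintegral_enorm_sub_integral_le_sqrt_variance (memLp_empiricalFreq (P := P) hX hs)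
  rw [integral_empiricalFreq hX hmap hs, variance_empiricalFreq hX hmap hindep hs] at h
  convert h using 3
  rw [Real.enorm_eq_ofReal_abs, abs_sub_comm]

end EmpiricalFreq

theorem stmt3 {Ω : Type*} [MeasurableSpace Ω] (P : Measure Ω) [IsProbabilityMeasure P]
    (m : Measure ℝ) [IsProbabilityMeasure m] (n : ℕ) (hn : 1 ≤ n)
    (X : Fin n → Ω → ℝ) (hmeas : ∀ k, Measurable (X k))
    (hindep : ProbabilityTheory.iIndepFun X P)
    (hid : ∀ k, Measure.map (X k) P = m) :
    (∫⁻ ω, W1e m (empMeasure n (fun k => X k ω)) ∂P) ≤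
      ENNReal.ofReal (1 / Real.sqrt n) *
        ∫⁻ x, ENNReal.ofReal (Real.sqrt (cdfOf m x * (1 - cdfOf m x))) := by
  have : Nonempty (Fin n) := ⟨⟨0, hn⟩⟩
  have hF : Measurable (cdfOf m) := cdfOf_eq_cdf m ▸ (monotone_cdf m).measurable
  calc ∫⁻ ω, W1e m (empMeasure n fun k => X k ω) ∂P
      = ∫⁻ x, ∫⁻ ω, ENNReal.ofReal |cdfOf m x - empiricalFreq X (Iic x) ω| ∂P := by
        simp only [W1e, cdfOf_empMeasure]
        exact lintegral_lintegral_swap ((hF.comp measurable_snd).sub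
          (measurable_empiricalFreq_Iic hmeas)).abs.ennreal_ofReal.aemeasurable
    _ ≤ ∫⁻ x, ENNReal.ofReal (1 / Real.sqrt n) *
          ENNReal.ofReal (Real.sqrt (cdfOf m x * (1 - cdfOf m x))) := by
        refine lintegral_mono fun x => (lintegral_abs_sub_empiricalFreq_le hmeas hid
          (fun i j hij => hindep.indepFun hij) measurableSet_Iic).trans_eq ?_
        rw [Fintype.card_fin, Real.sqrt_div' _ n.cast_nonneg, ← one_div_mul_eq_div,
          ENNReal.ofReal_mul (by positivity)]
        rfl
    _ = _ := lintegral_const_mul' _ _ ENNReal.ofReal_ne_top
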